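/- arXiv:0809.3417 — 2 statements merged into one kernel-verified Lean document; each statement's English description precedes it below -/
import Mathlib

section
/- (De Concini–Procesi relation) For a skew-symmetric n×n matrix A, even integers p, m ≤ n, and elements c_1,...,c_p, d_1,...,d_m of {1,...,n}, one has [c_1,...,c_p][d_1,...,d_m] − \sum_{h=1}^{p} [c_1,...,c_{h-1},d_1,c_{h+1},...,c_p][c_h,d_2,...,d_m] = \sum_{k=2}^{m} (−1)^{k−1} [d_k,d_1,c_1,...,c_p][d_2,...,d_{k−1},d_{k+1},...,d_m], where [...] denotes a pfaffian of A (taken with the sign conventions for repeated or unordered indices). -/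
open Matrix MvPolynomial

noncomputable def pf {R : Type*} [CommRing R] : (m : ℕ) → Matrix (Fin m) (Fin m) R → R
  | 0, _ => 1
  | 1, _ => 0
  | (m+2), A => ∑ j : Fin (m+1), (-1:R)^(j:ℕ) * A 0 j.succ *
      pf m (A.submatrix (fun i => Fin.succ (j.succAbove i)) (fun i => Fin.succ (j.succAbove i)))

noncomputable def pfS {R : Type*} [CommRing R] {n : ℕ} (A : Matrix (Fin n) (Fin n) R)
    (s : Finset (Fin n)) : R :=
  pf s.card (A.submatrix (s.orderEmbOfFin rfl) (s.orderEmbOfFin rfl))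


/-- Pfaffian of the submatrix of `A` picked out by a list of (possibly repeated,
possibly unordered) indices. -/
noncomputable def pfL {R : Type*} [CommRing R] {n : ℕ} (A : Matrix (Fin n) (Fin n) R)
    (l : List (Fin n)) : R :=
  pf l.length (A.submatrix l.get l.get)

set_option maxHeartbeats 1000000

namespace DCP2

variable {R : Type*} [CommRing R] {n : ℕ}

noncomputable def pfF (A : Matrix (Fin n) (Fin n) R) {k : ℕ} (f : Fin k → Fin n) : R :=
  pf k (A.submatrix f f)

def swf {k : ℕ} (a b x : Fin k) : Fin k :=
  if x.val = a.val then b else if x.val = b.val then a else x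

lemma swf_val {k : ℕ} (a b x : Fin k) :
    (swf a b x).val = if x.val = a.val then b.val else if x.val = b.val then a.val else x.val := by
  unfold swf; split_ifs <;> rfl

lemma swf_involutive {k : ℕ} (a b : Fin k) : Function.Involutive (swf a b) := by
  intro x; apply Fin.ext; rw [swf_val, swf_val]; split_ifs <;> omega

lemma succAbove_val {k : ℕ} (p : Fin (k+1)) (i : Fin k) :
    (p.succAbove i).val = if i.val < p.val then i.val else i.val + 1 := by
  rw [Fin.succAbove]
  split_ifs with h1 h2 h3 <;> simp_all [Fin.lt_def]

lemma pfF_expand {k : ℕ} (A : Matrix (Fin n) (Fin n) R) (f : Fin (k+2) → Fin n) :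
    pfF A f = ∑ j : Fin (k+1), (-1:R)^(j:ℕ) * A (f 0) (f j.succ) *
      pfF A (fun i => f ((j.succAbove i).succ)) := by
  show pf _ _ = _
  rw [pf]
  rfl

lemma pf_odd : ∀ (k : ℕ), k % 2 = 1 → ∀ (B : Matrix (Fin k) (Fin k) R), pf k B = 0 := by
  intro k
  induction k using Nat.strong_induction_on with
  | _ k IH =>
    match k with
    | 0 => intro h; omega
    | 1 => intro _ B; rfl
    | (m+2) =>
      intro h B
      rw [pf]
      apply Finset.sum_eq_zero
      intro j _
      rw [IH m (by omega) (by omega)]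
      ring

def idx2 {m : ℕ} (v : Fin (m+2)) (w : Fin (m+1)) : Fin (m+4) :=
  ((v.succ).succAbove w.succ).succ

def emb2 {m : ℕ} (v : Fin (m+2)) (w : Fin (m+1)) (i : Fin m) : Fin (m+4) :=
  ((v.succ).succAbove ((w.succAbove i).succ)).succ

lemma idx2_val {m : ℕ} (v : Fin (m+2)) (w : Fin (m+1)) :
    (idx2 v w).val = if w.val < v.val then w.val + 2 else w.val + 3 := by
  unfold idx2
  rw [Fin.val_succ, succAbove_val]
  simp only [Fin.val_succ]
  split_ifs <;> omega

lemma emb2_val {m : ℕ} (v : Fin (m+2)) (w : Fin (m+1)) (i : Fin m) :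
    (emb2 v w i).val =
      (if (if i.val < w.val then i.val else i.val + 1) + 1 < v.val + 1
        then (if i.val < w.val then i.val else i.val + 1) + 1
        else (if i.val < w.val then i.val else i.val + 1) + 2) + 1 := by
  unfold emb2
  rw [Fin.val_succ, succAbove_val, Fin.val_succ, succAbove_val]
  simp only [Fin.val_succ]

lemma pfF_double {m : ℕ} (A : Matrix (Fin n) (Fin n) R) (f : Fin (m+4) → Fin n) :
    pfF A f = A (f 0) (f 1) * pfF A (fun i : Fin (m+2) => f i.succ.succ) +
      ∑ v : Fin (m+2), ∑ w : Fin (m+1),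
        (-1:R)^((v:ℕ)+1+(w:ℕ)) * A (f 0) (f v.succ.succ) * A (f 1) (f (idx2 v w)) *
          pfF A (fun i => f (emb2 v w i)) := by
  rw [pfF_expand, Fin.sum_univ_succ]
  congr 1
  · simp [Fin.succAbove_zero]
  · apply Finset.sum_congr rfl
    intro v _
    rw [pfF_expand]
    have h0 : (Fin.succ v).succAbove 0 = 0 := by
      apply Fin.ext; rw [succAbove_val]; simp
    rw [Finset.mul_sum]
    apply Finset.sum_congr rfl
    intro w _
    have h1 : f (((v.succ).succAbove (0:Fin (m+2))).succ) = f 1 := by rw [h0]; rfl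
    rw [h1]
    show ((-1:R)^((v:ℕ)+1)) * _ * _ = _
    rw [pow_add, pow_add]
    unfold idx2 emb2
    ring

def tau {m : ℕ} (p : Fin (m+2) × Fin (m+1)) : Fin (m+2) × Fin (m+1) :=
  if h : p.2.val < p.1.val then
    (⟨p.2.val, by have := p.2.isLt; omega⟩, ⟨p.1.val - 1, by have := p.1.isLt; omega⟩)
  else
    (⟨p.2.val + 1, by have := p.2.isLt; omega⟩, ⟨p.1.val, by have := p.2.isLt; omega⟩)

lemma tau_involutive {m : ℕ} : Function.Involutive (tau (m := m)) := by
  rintro ⟨v, w⟩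
  unfold tau
  by_cases h : w.val < v.val
  · rw [dif_pos h]
    dsimp only
    rw [dif_neg (by omega)]
    refine Prod.ext (Fin.ext ?_) (Fin.ext ?_) <;> dsimp <;> omega
  · rw [dif_neg h]
    dsimp only
    rw [dif_pos (by omega)]
    refine Prod.ext (Fin.ext ?_) (Fin.ext ?_) <;> dsimp <;> omega

theorem pfF_swap (A : Matrix (Fin n) (Fin n) R) (hA : Aᵀ = -A) :
    ∀ (k : ℕ) (f : Fin k → Fin n) (a b : Fin k), (a:ℕ) + 1 = (b:ℕ) →
      pfF A (fun i => f (swf a b i)) = - pfF A f := by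
  have hA' : ∀ x y : Fin n, A x y = - A y x := by
    intro x y
    have := congrFun (congrFun hA y) x
    simpa using this
  intro k
  induction k using Nat.strong_induction_on with
  | _ k IH =>
  intro f a b hab
  by_cases hk : k % 2 = 1
  · show pf _ _ = - pf _ _
    rw [pf_odd k hk, pf_odd k hk, neg_zero]
  rcases k with _ | _ | _ | _ | m
  · exact absurd b.isLt (by omega)
  · exact absurd b.isLt (by omega)
  · -- k = 2 base case
    have hb2 := b.isLt
    have ha0 : (a:ℕ) = 0 := by omega
    have hb1 : (b:ℕ) = 1 := by omega
    have hm : ∀ g : Fin 0 → Fin n, pfF A g = 1 := fun g => rfl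
    rw [pfF_expand, pfF_expand, Fin.sum_univ_one, Fin.sum_univ_one, hm, hm]
    have e1 : swf a b 0 = b := by
      apply Fin.ext; rw [swf_val]; simp only [Fin.val_zero]; split_ifs <;> omega
    have e2 : swf a b ((0:Fin 1).succ) = a := by
      apply Fin.ext; rw [swf_val]
      simp only [Fin.val_succ, Fin.val_zero]; split_ifs <;> omega
    rw [e1, e2]
    have e3 : f ((0:Fin 1).succ) = f b := by
      congr 1; apply Fin.ext; simp only [Fin.val_succ, Fin.val_zero]; omega
    have e4 : f (0 : Fin (0+1+1)) = f a := by
      congr 1; apply Fin.ext; simp only [Fin.val_zero]; omega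
    rw [e3, e4, hA' (f b) (f a)]
    ring
  · exact absurd rfl hk
  · -- k = m + 4
    by_cases ha0 : (a:ℕ) = 0
    · -- swap of positions 0 and 1 : double expansion
      have hb1 : (b:ℕ) = 1 := by omega
      rw [pfF_double, pfF_double]
      beta_reduce
      have h01 : f (swf a b 0) = f 1 := by
        congr 1; apply Fin.ext; rw [swf_val]
        simp only [Fin.val_zero, Fin.val_one]; simp [ha0, hb1]
      have h10 : f (swf a b 1) = f 0 := by
        congr 1; apply Fin.ext; rw [swf_val]
        simp only [Fin.val_zero, Fin.val_one]; simp [ha0, hb1]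
      have hge2 : ∀ x : Fin (m+1+1+1+1), 2 ≤ (x:ℕ) → f (swf a b x) = f x := by
        intro x hx; congr 1; apply Fin.ext; rw [swf_val]; split_ifs <;> omega
      have hQ : pfF A (fun i : Fin (m+1+1) => f (swf a b i.succ.succ)) =
          pfF A (fun i : Fin (m+1+1) => f i.succ.succ) := by
        congr 1; funext i
        exact hge2 _ (by simp only [Fin.val_succ]; omega)
      have hvs : ∀ v : Fin (m+1+1), f (swf a b v.succ.succ) = f v.succ.succ := by
        intro v; exact hge2 _ (by simp only [Fin.val_succ]; omega)
      have hidx : ∀ (v : Fin (m+1+1)) (w : Fin (m+1)), f (swf a b (idx2 v w)) = f (idx2 v w) := by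
        intro v w; apply hge2; rw [idx2_val]; split_ifs <;> omega
      have hemb : ∀ (v : Fin (m+1+1)) (w : Fin (m+1)),
          pfF A (fun i => f (swf a b (emb2 v w i))) = pfF A (fun i => f (emb2 v w i)) := by
        intro v w; congr 1; funext i; apply hge2; rw [emb2_val]; split_ifs <;> omega
      rw [h01, h10, hQ]
      have hsum1 : (∑ v : Fin (m+1+1), ∑ w : Fin (m+1),
          (-1:R)^((v:ℕ)+1+(w:ℕ)) * A (f 1) (f (swf a b v.succ.succ)) *
            A (f 0) (f (swf a b (idx2 v w))) * pfF A (fun i => f (swf a b (emb2 v w i)))) =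
          ∑ v : Fin (m+1+1), ∑ w : Fin (m+1),
          (-1:R)^((v:ℕ)+1+(w:ℕ)) * A (f 1) (f v.succ.succ) *
            A (f 0) (f (idx2 v w)) * pfF A (fun i => f (emb2 v w i)) := by
        refine Finset.sum_congr rfl fun v _ => Finset.sum_congr rfl fun w _ => ?_
        rw [hvs v, hidx v w, hemb v w]
      rw [hsum1]
      have key : ∀ p : Fin (m+1+1) × Fin (m+1),
          (-1:R)^(((tau p).1:ℕ)+1+((tau p).2:ℕ)) * A (f 1) (f (tau p).1.succ.succ) *
            A (f 0) (f (idx2 (tau p).1 (tau p).2)) *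
            pfF A (fun i => f (emb2 (tau p).1 (tau p).2 i)) =
          - ((-1:R)^((p.1:ℕ)+1+(p.2:ℕ)) * A (f 0) (f p.1.succ.succ) *
            A (f 1) (f (idx2 p.1 p.2)) * pfF A (fun i => f (emb2 p.1 p.2 i))) := by
        rintro ⟨v, w⟩
        dsimp only
        by_cases h : (w:ℕ) < (v:ℕ)
        · have ec : (emb2 (⟨(w:ℕ), by have := w.isLt; omega⟩ : Fin (m+1+1))
              (⟨(v:ℕ)-1, by have := v.isLt; omega⟩ : Fin (m+1))) = emb2 v w := by
            funext i; apply Fin.ext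
            rw [emb2_val, emb2_val]; simp only [Fin.val_mk]; split_ifs <;> omega
          have ht : tau (v, w) = (⟨(w:ℕ), by have := w.isLt; omega⟩,
              ⟨(v:ℕ) - 1, by have := v.isLt; omega⟩) := by
            unfold tau; rw [dif_pos h]
          rw [ht]
          have ea : f (Fin.succ (Fin.succ ⟨(w:ℕ), by have := w.isLt; omega⟩)) = f (idx2 v w) := by
            congr 1; apply Fin.ext
            rw [idx2_val]; simp only [Fin.val_succ, Fin.val_mk]; split_ifs <;> omega
          have eb : f (idx2 ⟨(w:ℕ), by have := w.isLt; omega⟩ ⟨(v:ℕ)-1, by have := v.isLt; omega⟩)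
              = f v.succ.succ := by
            congr 1; apply Fin.ext
            rw [idx2_val]; simp only [Fin.val_succ, Fin.val_mk]; split_ifs <;> omega
          have ed : ((⟨(w:ℕ), by have := w.isLt; omega⟩ : Fin (m+1+1)) : ℕ) + 1 +
              ((⟨(v:ℕ)-1, by have := v.isLt; omega⟩ : Fin (m+1)) : ℕ) = (v:ℕ) + (w:ℕ) := by
            simp only [Fin.val_mk]; omega
          rw [ea, eb, ec, ed, show (v:ℕ)+1+(w:ℕ) = ((v:ℕ)+(w:ℕ))+1 from by omega, pow_succ]
          ring
        · have ec : (emb2 (⟨(w:ℕ)+1, by have := w.isLt; omega⟩ : Fin (m+1+1))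
              (⟨(v:ℕ), by have := w.isLt; omega⟩ : Fin (m+1))) = emb2 v w := by
            funext i; apply Fin.ext
            rw [emb2_val, emb2_val]; simp only [Fin.val_mk]; split_ifs <;> omega
          have ht : tau (v, w) = (⟨(w:ℕ)+1, by have := w.isLt; omega⟩,
              ⟨(v:ℕ), by have := w.isLt; omega⟩) := by
            unfold tau; rw [dif_neg h]
          rw [ht]
          have ea : f (Fin.succ (Fin.succ ⟨(w:ℕ)+1, by have := w.isLt; omega⟩)) = f (idx2 v w) := by
            congr 1; apply Fin.ext
            rw [idx2_val]; simp only [Fin.val_succ, Fin.val_mk]; split_ifs <;> omega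
          have eb : f (idx2 ⟨(w:ℕ)+1, by have := w.isLt; omega⟩ ⟨(v:ℕ), by have := w.isLt; omega⟩)
              = f v.succ.succ := by
            congr 1; apply Fin.ext
            rw [idx2_val]; simp only [Fin.val_succ, Fin.val_mk]; split_ifs <;> omega
          have ed : ((⟨(w:ℕ)+1, by have := w.isLt; omega⟩ : Fin (m+1+1)) : ℕ) + 1 +
              ((⟨(v:ℕ), by have := w.isLt; omega⟩ : Fin (m+1)) : ℕ) = ((v:ℕ) + (w:ℕ)) + 1 + 1 := by
            simp only [Fin.val_mk]; omega
          rw [ea, eb, ec, ed, show (v:ℕ)+1+(w:ℕ) = ((v:ℕ)+(w:ℕ))+1 from by omega,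
            pow_succ, pow_succ]
          ring
      have hsum2 : (∑ v : Fin (m+1+1), ∑ w : Fin (m+1),
          (-1:R)^((v:ℕ)+1+(w:ℕ)) * A (f 1) (f v.succ.succ) *
            A (f 0) (f (idx2 v w)) * pfF A (fun i => f (emb2 v w i))) =
          - ∑ v : Fin (m+1+1), ∑ w : Fin (m+1),
          (-1:R)^((v:ℕ)+1+(w:ℕ)) * A (f 0) (f v.succ.succ) *
            A (f 1) (f (idx2 v w)) * pfF A (fun i => f (emb2 v w i)) := by
        rw [← Finset.sum_product', ← Finset.sum_product', Finset.univ_product_univ]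
        have h1 : (∑ p : Fin (m+1+1) × Fin (m+1),
            (-1:R)^((p.1:ℕ)+1+(p.2:ℕ)) * A (f 1) (f p.1.succ.succ) *
              A (f 0) (f (idx2 p.1 p.2)) * pfF A (fun i => f (emb2 p.1 p.2 i))) =
            ∑ p : Fin (m+1+1) × Fin (m+1),
            (-1:R)^(((tau p).1:ℕ)+1+((tau p).2:ℕ)) * A (f 1) (f (tau p).1.succ.succ) *
              A (f 0) (f (idx2 (tau p).1 (tau p).2)) *
              pfF A (fun i => f (emb2 (tau p).1 (tau p).2 i)) :=
          (Equiv.sum_comp (Function.Involutive.toPerm tau tau_involutive) _).symm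
        have h2 : (∑ p : Fin (m+1+1) × Fin (m+1),
            (-1:R)^(((tau p).1:ℕ)+1+((tau p).2:ℕ)) * A (f 1) (f (tau p).1.succ.succ) *
              A (f 0) (f (idx2 (tau p).1 (tau p).2)) *
              pfF A (fun i => f (emb2 (tau p).1 (tau p).2 i))) =
            - ∑ p : Fin (m+1+1) × Fin (m+1),
            (-1:R)^((p.1:ℕ)+1+(p.2:ℕ)) * A (f 0) (f p.1.succ.succ) *
              A (f 1) (f (idx2 p.1 p.2)) * pfF A (fun i => f (emb2 p.1 p.2 i)) := by
          rw [← Finset.sum_neg_distrib]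
          exact Finset.sum_congr rfl (fun p _ => key p)
        exact h1.trans h2
      rw [hsum2, hA' (f 1) (f 0)]
      ring
    · -- swap not involving position 0
      obtain ⟨u, hu⟩ : ∃ u, (a:ℕ) = u + 1 := ⟨(a:ℕ) - 1, by omega⟩
      have hb4 := b.isLt
      have hbu : (b:ℕ) = u + 2 := by omega
      rw [pfF_expand, pfF_expand]
      beta_reduce
      have h0 : f (swf a b 0) = f 0 := by
        congr 1; apply Fin.ext; rw [swf_val]
        simp only [Fin.val_zero]; simp [hu, hbu]
      rw [h0]
      have key : ∀ j : Fin (m+1+1+1),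
          (-1:R)^((swf (⟨u, by omega⟩ : Fin (m+1+1+1)) ⟨u+1, by omega⟩ j : Fin (m+1+1+1)):ℕ) *
            A (f 0) (f (swf a b (swf (⟨u, by omega⟩ : Fin (m+1+1+1)) ⟨u+1, by omega⟩ j).succ)) *
            pfF A (fun i => f (swf a b
              (((swf (⟨u, by omega⟩ : Fin (m+1+1+1)) ⟨u+1, by omega⟩ j).succAbove i).succ))) =
          - ((-1:R)^(j:ℕ) * A (f 0) (f j.succ) *
              pfF A (fun i => f ((j.succAbove i).succ))) := by
        intro j
        by_cases hju : (j:ℕ) = u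
        · have hσ : swf (⟨u, by omega⟩ : Fin (m+1+1+1)) ⟨u+1, by omega⟩ j =
              ⟨u+1, by omega⟩ := by
            apply Fin.ext; rw [swf_val]; simp only [Fin.val_mk]; split_ifs <;> omega
          rw [hσ]
          have ea : f (swf a b (Fin.succ (⟨u+1, by omega⟩ : Fin (m+1+1+1)))) = f j.succ := by
            congr 1; apply Fin.ext; rw [swf_val]
            simp only [Fin.val_succ, Fin.val_mk]; split_ifs <;> omega
          have eM : (fun i : Fin (m+1+1) => f (swf a b
              ((Fin.succAbove ⟨u+1, by omega⟩ i).succ))) =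
              (fun i : Fin (m+1+1) => f ((j.succAbove i).succ)) := by
            funext i; congr 1; apply Fin.ext
            simp only [swf_val, Fin.val_succ, succAbove_val, Fin.val_mk]
            split_ifs <;> omega
          rw [ea, eM, show ((⟨u+1, by omega⟩ : Fin (m+1+1+1)):ℕ) = u+1 from rfl,
            show (j:ℕ) = u from hju, pow_succ]
          ring
        · by_cases hju1 : (j:ℕ) = u + 1
          · have hσ : swf (⟨u, by omega⟩ : Fin (m+1+1+1)) ⟨u+1, by omega⟩ j =
                ⟨u, by omega⟩ := by
              apply Fin.ext; rw [swf_val]; simp only [Fin.val_mk]; split_ifs <;> omega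
            rw [hσ]
            have ea : f (swf a b (Fin.succ (⟨u, by omega⟩ : Fin (m+1+1+1)))) = f j.succ := by
              congr 1; apply Fin.ext; rw [swf_val]
              simp only [Fin.val_succ, Fin.val_mk]; split_ifs <;> omega
            have eM : (fun i : Fin (m+1+1) => f (swf a b
                ((Fin.succAbove ⟨u, by omega⟩ i).succ))) =
                (fun i : Fin (m+1+1) => f ((j.succAbove i).succ)) := by
              funext i; congr 1; apply Fin.ext
              simp only [swf_val, Fin.val_succ, succAbove_val, Fin.val_mk]
              split_ifs <;> omega
            rw [ea, eM, show ((⟨u, by omega⟩ : Fin (m+1+1+1)):ℕ) = u from rfl,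
              show (j:ℕ) = u+1 from hju1, pow_succ]
            ring
          · have hσ : swf (⟨u, by omega⟩ : Fin (m+1+1+1)) ⟨u+1, by omega⟩ j = j := by
              apply Fin.ext; rw [swf_val]; simp only [Fin.val_mk]; split_ifs <;> omega
            rw [hσ]
            have ea : f (swf a b j.succ) = f j.succ := by
              congr 1; apply Fin.ext; rw [swf_val]
              simp only [Fin.val_succ]; split_ifs <;> omega
            have hM : pfF A (fun i => f (swf a b ((j.succAbove i).succ))) =
                - pfF A (fun i : Fin (m+1+1) => f ((j.succAbove i).succ)) := by
              by_cases hjl : (j:ℕ) < u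
              · have eM : (fun i : Fin (m+1+1) => f (swf a b ((j.succAbove i).succ))) =
                    (fun i : Fin (m+1+1) => f ((j.succAbove
                      (swf (⟨u-1, by omega⟩ : Fin (m+1+1)) ⟨u, by omega⟩ i)).succ)) := by
                  funext i; congr 1; apply Fin.ext
                  simp only [swf_val, Fin.val_succ, succAbove_val, Fin.val_mk]
                  split_ifs <;> omega
                rw [eM]
                exact IH (m+1+1) (by omega) (fun i' => f ((j.succAbove i').succ))
                  ⟨u-1, by omega⟩ ⟨u, by omega⟩ (by simp only [Fin.val_mk]; omega)
              · have eM : (fun i : Fin (m+1+1) => f (swf a b ((j.succAbove i).succ))) =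
                    (fun i : Fin (m+1+1) => f ((j.succAbove
                      (swf (⟨u, by omega⟩ : Fin (m+1+1)) ⟨u+1, by
                        have := j.isLt; omega⟩ i)).succ)) := by
                  funext i; congr 1; apply Fin.ext
                  simp only [swf_val, Fin.val_succ, succAbove_val, Fin.val_mk]
                  split_ifs <;> omega
                rw [eM]
                exact IH (m+1+1) (by omega) (fun i' => f ((j.succAbove i').succ))
                  ⟨u, by omega⟩ ⟨u+1, by have := j.isLt; omega⟩ (by simp only [Fin.val_mk])
            rw [ea, hM]
            ring
      have h1 : (∑ j : Fin (m+1+1+1), (-1:R)^(j:ℕ) * A (f 0) (f (swf a b j.succ)) *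
            pfF A (fun i => f (swf a b ((j.succAbove i).succ)))) =
          ∑ j : Fin (m+1+1+1),
            (-1:R)^((swf (⟨u, by omega⟩ : Fin (m+1+1+1)) ⟨u+1, by omega⟩ j : Fin (m+1+1+1)):ℕ) *
            A (f 0) (f (swf a b (swf (⟨u, by omega⟩ : Fin (m+1+1+1)) ⟨u+1, by omega⟩ j).succ)) *
            pfF A (fun i => f (swf a b
              (((swf (⟨u, by omega⟩ : Fin (m+1+1+1)) ⟨u+1, by omega⟩ j).succAbove i).succ))) :=
        (Equiv.sum_comp (Function.Involutive.toPerm _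
          (swf_involutive (⟨u, by omega⟩ : Fin (m+1+1+1)) ⟨u+1, by omega⟩)) _).symm
      have h2 : (∑ j : Fin (m+1+1+1),
            (-1:R)^((swf (⟨u, by omega⟩ : Fin (m+1+1+1)) ⟨u+1, by omega⟩ j : Fin (m+1+1+1)):ℕ) *
            A (f 0) (f (swf a b (swf (⟨u, by omega⟩ : Fin (m+1+1+1)) ⟨u+1, by omega⟩ j).succ)) *
            pfF A (fun i => f (swf a b
              (((swf (⟨u, by omega⟩ : Fin (m+1+1+1)) ⟨u+1, by omega⟩ j).succAbove i).succ)))) =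
          - ∑ j : Fin (m+1+1+1), (-1:R)^(j:ℕ) * A (f 0) (f j.succ) *
            pfF A (fun i => f ((j.succAbove i).succ)) := by
        rw [← Finset.sum_neg_distrib]
        exact Finset.sum_congr rfl (fun j _ => key j)
      exact h1.trans h2

lemma pfL_eq (A : Matrix (Fin n) (Fin n) R) (l : List (Fin n)) : pfL A l = pfF A l.get := rfl

lemma pfF_congr {k k' : ℕ} (A : Matrix (Fin n) (Fin n) R) (h : k = k') (f : Fin k → Fin n)
    (g : Fin k' → Fin n) (hfg : ∀ i : Fin k, f i = g (Fin.cast h i)) : pfF A f = pfF A g := by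
  subst h
  have : f = g := funext fun i => hfg i
  rw [this]

lemma pfL_expand (A : Matrix (Fin n) (Fin n) R) (x : Fin n) (l : List (Fin n)) (k : ℕ)
    (hl : l.length = k + 1) :
    pfL A (x :: l) = ∑ j : Fin (k+1), (-1:R)^(j:ℕ) * A x (l.get (Fin.cast hl.symm j)) *
      pfL A (l.eraseIdx (j:ℕ)) := by
  have hxl : (x :: l).length = k + 2 := by simp [hl]
  have e0 : pfL A (x :: l) =
      pfF A (fun i : Fin (k+2) => (x::l).get (Fin.cast hxl.symm i)) :=
    pfF_congr A hxl _ _ (fun i => rfl)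
  rw [e0, pfF_expand]
  apply Finset.sum_congr rfl
  intro j _
  have e1 : (x::l).get (Fin.cast hxl.symm 0) = x := by
    simp [List.get_eq_getElem]
  have e2 : (x::l).get (Fin.cast hxl.symm (Fin.succ j)) = l.get (Fin.cast hl.symm j) := by
    simp [List.get_eq_getElem]
  have e3 : pfF A (fun i : Fin k => (x::l).get (Fin.cast hxl.symm ((j.succAbove i).succ))) =
      pfL A (l.eraseIdx (j:ℕ)) := by
    have hel : k = (l.eraseIdx (j:ℕ)).length := by
      rw [List.length_eraseIdx]
      have := j.isLt
      split_ifs <;> omega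
    rw [pfL_eq]
    apply pfF_congr A hel
    intro i
    simp only [List.get_eq_getElem, Fin.coe_cast, Fin.val_succ, List.getElem_cons_succ,
      List.getElem_eraseIdx, succAbove_val]
    split_ifs <;> rfl
  show (-1:R)^(j:ℕ) * A ((x::l).get (Fin.cast hxl.symm 0))
      ((x::l).get (Fin.cast hxl.symm (Fin.succ j))) * pfF A _ = _
  rw [e1, e2, e3]

/-- cycle sending `i < h` to `i+1`, `h` to `0`, fixing the rest -/
def cyc {k : ℕ} (h : ℕ) (i : Fin k) : Fin k :=
  if hi : i.val < h ∧ h < k then ⟨i.val + 1, by omega⟩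
  else if i.val = h then ⟨0, by have := i.isLt; omega⟩ else i

lemma cyc_val {k : ℕ} (h : ℕ) (i : Fin k) :
    (cyc h i).val = if i.val < h ∧ h < k then i.val + 1
      else if i.val = h then 0 else i.val := by
  unfold cyc; split_ifs <;> rfl

lemma pfF_cyc (A : Matrix (Fin n) (Fin n) R) (hA : Aᵀ = -A) {k : ℕ} (g : Fin k → Fin n) :
    ∀ (h : ℕ), h < k → pfF A (fun i => g (cyc h i)) = (-1:R)^h * pfF A g := by
  intro h
  induction h with
  | zero =>
    intro _
    have : (fun i => g (cyc 0 i)) = g := by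
      funext i; congr 1; apply Fin.ext; rw [cyc_val]; split_ifs <;> omega
    rw [this, pow_zero, one_mul]
  | succ h IH =>
    intro hk
    have hcomp : (fun i => g (cyc (h+1) i)) =
        (fun i : Fin k => (fun i' => g (cyc h i')) (swf (⟨h, by omega⟩ : Fin k)
          ⟨h+1, by omega⟩ i)) := by
      funext i; congr 1; apply Fin.ext
      simp only [cyc_val, swf_val, Fin.val_mk]
      split_ifs <;> omega
    rw [hcomp, pfF_swap A hA k (fun i' => g (cyc h i')) ⟨h, by omega⟩ ⟨h+1, by omega⟩
      (by simp only [Fin.val_mk]), IH (by omega), pow_succ]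
    ring

lemma pfL_set (A : Matrix (Fin n) (Fin n) R) (hA : Aᵀ = -A) (c : List (Fin n)) (d1 : Fin n)
    (h : ℕ) (hh : h < c.length) :
    pfL A (c.set h d1) = (-1:R)^h * pfL A (d1 :: c.eraseIdx h) := by
  have hlen : (c.set h d1).length = (d1 :: c.eraseIdx h).length := by
    simp only [List.length_set, List.length_cons, List.length_eraseIdx]
    split_ifs <;> omega
  have e1 : pfL A (c.set h d1) =
      pfF A (fun i' : Fin (d1 :: c.eraseIdx h).length => (d1 :: c.eraseIdx h).get (cyc h i')) := by
    rw [pfL_eq]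
    apply pfF_congr A hlen
    intro i
    have hi : (i : ℕ) < c.length := by simpa using i.isLt
    have hlen2 : (d1 :: c.eraseIdx h).length = c.length := by
      simp only [List.length_cons, List.length_eraseIdx]; split_ifs <;> omega
    rcases Nat.lt_trichotomy i.val h with hlt | heq | hgt
    · have hc : cyc h (Fin.cast hlen i) = ⟨i.val + 1, by
          simp only [List.length_cons, List.length_eraseIdx]; split_ifs <;> omega⟩ := by
        apply Fin.ext; rw [cyc_val]; simp only [Fin.coe_cast, Fin.val_mk]; split_ifs <;> omega
      rw [hc]
      simp only [List.get_eq_getElem, List.getElem_set, Fin.val_mk, List.getElem_cons_succ,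
        List.getElem_eraseIdx]
      split_ifs <;> first | rfl | omega
    · have hc : cyc h (Fin.cast hlen i) = ⟨0, by simp⟩ := by
        apply Fin.ext; rw [cyc_val]; simp only [Fin.coe_cast, Fin.val_mk]; split_ifs <;> omega
      rw [hc]
      simp only [List.get_eq_getElem, List.getElem_set, Fin.val_mk, List.getElem_cons_zero]
      split_ifs <;> first | rfl | omega
    · obtain ⟨iv, hiv⟩ : ∃ iv, (i : ℕ) = iv + 1 := ⟨(i : ℕ) - 1, by omega⟩
      have hc : cyc h (Fin.cast hlen i) = ⟨iv + 1, by omega⟩ := by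
        apply Fin.ext; rw [cyc_val]; simp only [Fin.coe_cast, Fin.val_mk]; split_ifs <;> omega
      rw [hc]
      simp only [List.get_eq_getElem, List.getElem_set, Fin.val_mk, List.getElem_cons_succ,
        List.getElem_eraseIdx, hiv]
      split_ifs <;> first | rfl | omega
  rw [e1]
  exact pfF_cyc A hA _ h
    (by simp only [List.length_cons, List.length_eraseIdx]; split_ifs <;> omega)

lemma pfL_cons_cons (A : Matrix (Fin n) (Fin n) R) (x d1 : Fin n) (c : List (Fin n)) (p : ℕ)
    (hc : c.length = p) :
    pfL A (x :: d1 :: c) = A x d1 * pfL A c +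
      ∑ h : Fin p, (-1:R)^((h:ℕ)+1) * A x (c.get (Fin.cast hc.symm h)) *
        pfL A (d1 :: c.eraseIdx (h:ℕ)) := by
  rw [pfL_expand A x (d1 :: c) p (by simp [hc]), Fin.sum_univ_succ]
  congr 1
  simp only [List.get_eq_getElem, Fin.coe_cast, Fin.val_zero, List.getElem_cons_zero,
    List.eraseIdx_cons_zero, pow_zero, one_mul]

lemma sum_range_attach {M : Type*} [AddCommMonoid M] (p : ℕ)
    (F : {x // x ∈ Finset.range p} → M) :
    ∑ h ∈ (Finset.range p).attach, F h =
      ∑ h : Fin p, F ⟨(h:ℕ), Finset.mem_range.mpr h.isLt⟩ := by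
  exact Finset.sum_bij' (fun a _ => (⟨a.1, Finset.mem_range.mp a.2⟩ : Fin p))
    (fun b _ => (⟨(b:ℕ), Finset.mem_range.mpr b.isLt⟩ : {x // x ∈ Finset.range p}))
    (fun a _ => Finset.mem_univ _) (fun b _ => Finset.mem_attach _ _)
    (fun a _ => Subtype.ext rfl) (fun b _ => Fin.ext rfl)
    (fun a _ => congrArg F (Subtype.ext rfl))

lemma sum_Ico2_attach {M : Type*} [AddCommMonoid M] (m2 : ℕ)
    (F : {x // x ∈ Finset.Ico 2 (m2+2+1)} → M) :
    ∑ k ∈ (Finset.Ico 2 (m2+2+1)).attach, F k =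
      ∑ j : Fin (m2+1), F ⟨(j:ℕ)+2, Finset.mem_Ico.mpr ⟨by omega, by have := j.isLt; omega⟩⟩ := by
  exact Finset.sum_bij' (fun a _ => (⟨a.1 - 2, by
      have := Finset.mem_Ico.mp a.2; omega⟩ : Fin (m2+1)))
    (fun b _ => (⟨(b:ℕ)+2, Finset.mem_Ico.mpr ⟨by omega, by have := b.isLt; omega⟩⟩ :
      {x // x ∈ Finset.Ico 2 (m2+2+1)}))
    (fun a _ => Finset.mem_univ _) (fun b _ => Finset.mem_attach _ _)
    (fun a _ => Subtype.ext (by have := Finset.mem_Ico.mp a.2; simp only [Fin.val_mk]; omega))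
    (fun b _ => Fin.ext (by simp only [Fin.val_mk]; omega))
    (fun a _ => congrArg F (Subtype.ext
      (by have := Finset.mem_Ico.mp a.2; simp only [Fin.val_mk]; omega)))

end DCP2

open DCP2 in
/-- the De Concini–Procesi relation among pfaffians of a skew-symmetric matrix. -/
theorem deConcini_procesi {R : Type*} [CommRing R] {n p m : ℕ}
    (A : Matrix (Fin n) (Fin n) R) (hA : Aᵀ = -A)
    (hp : Even p) (hm : Even m) (hp1 : 1 ≤ p) (hm1 : 1 ≤ m) (hpn : p ≤ n) (hmn : m ≤ n)
    (c d : List (Fin n)) (hc : c.length = p) (hd : d.length = m) :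
    pfL A c * pfL A d -
      ∑ h ∈ (Finset.range p).attach,
        pfL A (c.set h.1 (d.get ⟨0, by omega⟩)) *
          pfL A (c.get ⟨h.1, by have := h.2; rw [Finset.mem_range] at this; omega⟩ :: d.tail) =
    ∑ k ∈ (Finset.Ico 2 (m + 1)).attach,
      (-1 : R) ^ (k.1 - 1) *
        pfL A (d.get ⟨k.1 - 1, by have := k.2; rw [Finset.mem_Ico] at this; omega⟩ ::
          d.get ⟨0, by omega⟩ :: c) *
        pfL A (d.tail.eraseIdx (k.1 - 2)) := by
  have hA' : ∀ x y : Fin n, A x y = - A y x := by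
    intro x y; have := congrFun (congrFun hA y) x; simpa using this
  rcases d with _ | ⟨d1, d'⟩
  · simp at hd; omega
  obtain ⟨m2, rfl⟩ : ∃ m2, m = m2 + 2 := ⟨m - 2, by rcases hm with ⟨t, ht⟩; omega⟩
  have hd' : d'.length = m2 + 1 := by simpa using hd
  show pfL A c * pfL A (d1 :: d') -
      ∑ h ∈ (Finset.range p).attach,
        pfL A (c.set (h:ℕ) d1) *
          pfL A (c.get ⟨(h:ℕ), by have := Finset.mem_range.mp h.2; omega⟩ :: d') =
    ∑ k ∈ (Finset.Ico 2 (m2+2+1)).attach,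
      (-1 : R) ^ ((k:ℕ) - 1) *
        pfL A ((d1 :: d').get ⟨(k:ℕ) - 1, by
            have := Finset.mem_Ico.mp k.2; simp only [List.length_cons]; omega⟩ :: d1 :: c) *
        pfL A (d'.eraseIdx ((k:ℕ) - 2))
  have e1 : (∑ h ∈ (Finset.range p).attach,
        pfL A (c.set (h:ℕ) d1) *
          pfL A (c.get ⟨(h:ℕ), by have := Finset.mem_range.mp h.2; omega⟩ :: d')) =
      ∑ h : Fin p, pfL A (c.set (h:ℕ) d1) * pfL A (c.get (Fin.cast hc.symm h) :: d') :=
    (sum_range_attach p _).trans (Finset.sum_congr rfl fun h _ => rfl)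
  have e2 : (∑ k ∈ (Finset.Ico 2 (m2+2+1)).attach,
        (-1 : R) ^ ((k:ℕ) - 1) *
          pfL A ((d1 :: d').get ⟨(k:ℕ) - 1, by
              have := Finset.mem_Ico.mp k.2; simp only [List.length_cons]; omega⟩ :: d1 :: c) *
          pfL A (d'.eraseIdx ((k:ℕ) - 2))) =
      ∑ j : Fin (m2+1), (-1:R)^((j:ℕ)+1) *
        pfL A (d'.get (Fin.cast hd'.symm j) :: d1 :: c) * pfL A (d'.eraseIdx (j:ℕ)) :=
    (sum_Ico2_attach m2 _).trans (Finset.sum_congr rfl fun j _ => rfl)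
  rw [e1, e2, pfL_expand A d1 d' m2 hd', Finset.mul_sum]
  have h2 : (∑ h : Fin p, pfL A (c.set (h:ℕ) d1) * pfL A (c.get (Fin.cast hc.symm h) :: d')) =
      ∑ j : Fin (m2+1), ∑ h : Fin p,
        ((-1:R)^(h:ℕ) * pfL A (d1 :: c.eraseIdx (h:ℕ))) *
          ((-1:R)^(j:ℕ) * A (c.get (Fin.cast hc.symm h)) (d'.get (Fin.cast hd'.symm j)) *
            pfL A (d'.eraseIdx (j:ℕ))) := by
    refine Eq.trans ?_ Finset.sum_comm
    refine Finset.sum_congr rfl fun h _ => ?_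
    rw [pfL_set A hA c d1 (h:ℕ) (by omega), pfL_expand A _ d' m2 hd', Finset.mul_sum]
  rw [h2, ← Finset.sum_sub_distrib]
  refine Finset.sum_congr rfl fun j _ => ?_
  rw [pfL_cons_cons A (d'.get (Fin.cast hd'.symm j)) d1 c p hc,
    hA' d1 (d'.get (Fin.cast hd'.symm j))]
  have e3 : ∀ h : Fin p,
      A (c.get (Fin.cast hc.symm h)) (d'.get (Fin.cast hd'.symm j)) =
        - A (d'.get (Fin.cast hd'.symm j)) (c.get (Fin.cast hc.symm h)) := fun h => hA' _ _
  simp only [e3]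
  have hS : (∑ h : Fin p, ((-1:R)^(h:ℕ) * pfL A (d1 :: c.eraseIdx (h:ℕ))) *
        ((-1:R)^(j:ℕ) * (- A (d'.get (Fin.cast hd'.symm j)) (c.get (Fin.cast hc.symm h))) *
          pfL A (d'.eraseIdx (j:ℕ)))) =
      ((-1:R)^(j:ℕ) * pfL A (d'.eraseIdx (j:ℕ))) *
        (∑ h : Fin p, (-1:R)^((h:ℕ)+1) *
          A (d'.get (Fin.cast hd'.symm j)) (c.get (Fin.cast hc.symm h)) *
          pfL A (d1 :: c.eraseIdx (h:ℕ))) := by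
    rw [Finset.mul_sum]
    exact Finset.sum_congr rfl fun h _ => by ring
  rw [hS]
  ring
end

section
/- If a_k − a_{k−1} ≤ t_{k−1} − t_k, then every 2t_{k−1}-pfaffian of the block X_{k−1} lies in the ideal generated by the 2t_k-pfaffians of X_k; i.e. I_{2t_{k−1}}(X_{k−1}) ⊆ I_{2t_k}(X_k). -/
open Matrix MvPolynomial

lemma pfS_eq {R : Type*} [CommRing R] {n : ℕ} (A : Matrix (Fin n) (Fin n) R)
    (s : Finset (Fin n)) {m : ℕ} (h : s.card = m) :
    pfS A s = pf m (A.submatrix (s.orderEmbOfFin h) (s.orderEmbOfFin h)) := by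
  subst h; rfl

lemma pfS_expand {R : Type*} [CommRing R] {n : ℕ} (A : Matrix (Fin n) (Fin n) R)
    (s : Finset (Fin n)) {m : ℕ} (h : s.card = m + 2) :
    pfS A s = ∑ j : Fin (m+1), (-1:R)^(j:ℕ) *
      A (s.orderEmbOfFin h 0) (s.orderEmbOfFin h j.succ) *
      pfS A ((s.erase (s.orderEmbOfFin h 0)).erase (s.orderEmbOfFin h j.succ)) := by
  set e := s.orderEmbOfFin h with he
  rw [pfS_eq A s h]
  show (∑ j : Fin (m+1), (-1:R)^(j:ℕ) * (A.submatrix e e) 0 j.succ *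
      pf m ((A.submatrix e e).submatrix (fun i => Fin.succ (j.succAbove i))
        (fun i => Fin.succ (j.succAbove i)))) = _
  refine Finset.sum_congr rfl fun j _ => ?_
  have h0 : e 0 ∈ s := s.orderEmbOfFin_mem h 0
  have hj : e j.succ ∈ s.erase (e 0) := by
    refine Finset.mem_erase.2 ⟨fun hc => ?_, s.orderEmbOfFin_mem h j.succ⟩
    exact Fin.succ_ne_zero j (e.injective hc)
  have hcard : ((s.erase (e 0)).erase (e j.succ)).card = m := by
    rw [Finset.card_erase_of_mem hj, Finset.card_erase_of_mem h0, h]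
    rfl
  rw [pfS_eq A _ hcard]
  congr 1
  rw [Matrix.submatrix_submatrix]
  have hfun : (fun i : Fin m => e (Fin.succ (j.succAbove i))) =
      ((s.erase (e 0)).erase (e j.succ)).orderEmbOfFin hcard := by
    apply Finset.orderEmbOfFin_unique
    · intro i
      refine Finset.mem_erase.2 ⟨fun hc => ?_, Finset.mem_erase.2 ⟨fun hc => ?_, s.orderEmbOfFin_mem h _⟩⟩
      · exact (j.succAbove_ne i) (Fin.succ_injective _ (e.injective hc))
      · exact Fin.succ_ne_zero _ (e.injective hc)
    · intro x y hxy
      exact e.strictMono (Fin.succ_lt_succ_iff.2 (Fin.strictMono_succAbove j hxy))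
  rw [show (⇑e ∘ fun i : Fin m => Fin.succ (j.succAbove i)) =
      ⇑(((s.erase (e 0)).erase (e j.succ)).orderEmbOfFin hcard) from hfun]

abbrev SkewVars (n : ℕ) := {p : Fin n × Fin n // p.1 < p.2}

noncomputable def genSkew (K : Type*) [Field K] (n : ℕ) :
    Matrix (Fin n) (Fin n) (MvPolynomial (SkewVars n) K) :=
  fun i j => if h : i < j then X ⟨(i,j), h⟩ else if h' : j < i then - X ⟨(j,i), h'⟩ else 0

noncomputable def blockPf (K : Type*) [Field K] (n t a b : ℕ) :
    Ideal (MvPolynomial (SkewVars n) K) :=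
  Ideal.span {f | ∃ s : Finset (Fin n), s.card = 2*t ∧
    (∀ i ∈ s, a ≤ (i:ℕ) ∧ (i:ℕ) ≤ b) ∧ f = pfS (genSkew K n) s}

lemma mem_blockPf (K : Type*) [Field K] (n t a b : ℕ) :
    ∀ k, t ≤ k → ∀ s : Finset (Fin n), s.card = 2*k →
    (∀ i ∈ s, (i:ℕ) ≤ b) →
    (s.filter (fun i : Fin n => (i:ℕ) < a)).card + t ≤ k →
    pfS (genSkew K n) s ∈ blockPf K n t a b := by
  intro k hk
  induction k, hk using Nat.le_induction with
  | base =>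
    intro s hcard hb hfil
    apply Ideal.subset_span
    refine ⟨s, hcard, fun i hi => ⟨?_, hb i hi⟩, rfl⟩
    by_contra hlt
    push_neg at hlt
    have h1 : i ∈ s.filter (fun i : Fin n => (i:ℕ) < a) := Finset.mem_filter.2 ⟨hi, hlt⟩
    have h2 := Finset.card_pos.2 ⟨i, h1⟩
    omega
  | succ k hk ih =>
    intro s hcard hb hfil
    have hcard' : s.card = 2*k + 2 := by omega
    rw [pfS_expand (genSkew K n) s hcard']
    apply Ideal.sum_mem
    intro j _
    apply Ideal.mul_mem_left
    set e := s.orderEmbOfFin hcard' with he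
    set s' := (s.erase (e 0)).erase (e j.succ) with hs'
    have h0 : e 0 ∈ s := s.orderEmbOfFin_mem hcard' 0
    have hj : e j.succ ∈ s.erase (e 0) := by
      refine Finset.mem_erase.2 ⟨fun hc => ?_, s.orderEmbOfFin_mem hcard' j.succ⟩
      exact Fin.succ_ne_zero j (e.injective hc)
    have hcards' : s'.card = 2*k := by
      rw [hs', Finset.card_erase_of_mem hj, Finset.card_erase_of_mem h0, hcard']
      omega
    have hsub : s' ⊆ s := (Finset.erase_subset _ _).trans (Finset.erase_subset _ _)
    refine ih s' hcards' (fun i hi => hb i (hsub hi)) ?_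
    have hmin : e 0 = s.min' (Finset.card_pos.mp (by omega)) := by
      rw [he, ← Fin.mk_zero]
      exact Finset.orderEmbOfFin_zero hcard' (by omega)
    by_cases hlt : ((e 0 : Fin n) : ℕ) < a
    · have hss : s'.filter (fun i : Fin n => (i:ℕ) < a) ⊆ (s.filter (fun i : Fin n => (i:ℕ) < a)).erase (e 0) := by
        intro i hi
        obtain ⟨hi1, hi2⟩ := Finset.mem_filter.1 hi
        refine Finset.mem_erase.2 ⟨(Finset.mem_erase.1 (Finset.mem_erase.1 hi1).2).1,
          Finset.mem_filter.2 ⟨hsub hi1, hi2⟩⟩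
      have h1 : e 0 ∈ s.filter (fun i : Fin n => (i:ℕ) < a) := Finset.mem_filter.2 ⟨h0, hlt⟩
      have h2 := Finset.card_le_card hss
      rw [Finset.card_erase_of_mem h1] at h2
      have h3 := Finset.card_pos.2 ⟨_, h1⟩
      omega
    · have : s'.filter (fun i : Fin n => (i:ℕ) < a) = ∅ := by
        refine Finset.filter_eq_empty_iff.2 fun {i} hi => ?_
        have : e 0 ≤ i := hmin ▸ Finset.min'_le s i (hsub hi)
        simp only [not_lt] at hlt ⊢
        exact le_trans hlt this
      rw [this, Finset.card_empty]
      omega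

/-- if `a_k − a_{k−1} ≤ t_{k−1} − t_k` (written `a + t ≤ a' + t'` without
natural subtraction, where unprimed data is the `k`-th block and primed data the
`(k−1)`-st), then `I_{2t_{k−1}}(X_{k−1}) ⊆ I_{2t_k}(X_k)`. -/
theorem pfaffian_ideal_containment_of_row_overlap (K : Type*) [Field K]
    (n t t' a a' b b' : ℕ) (hn : b < n) (ht : 1 ≤ t) (ht' : 1 ≤ t')
    (haa : a' ≤ a) (hbb : b' ≤ b)
    (hyp : a + t ≤ a' + t') :
    blockPf K n t' a' b' ≤ blockPf K n t a b := by
  rw [blockPf, Ideal.span_le]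
  rintro f ⟨s, hcard, hmem, rfl⟩
  have hfil : (s.filter (fun i : Fin n => (i:ℕ) < a)).card ≤ a - a' := by
    have h1 : (s.filter (fun i : Fin n => (i:ℕ) < a)).card ≤ (Finset.Ico a' a).card := by
      apply Finset.card_le_card_of_injOn (fun i : Fin n => (i:ℕ))
      · intro i hi
        obtain ⟨hi1, hi2⟩ := Finset.mem_filter.1 hi
        exact Finset.mem_Ico.2 ⟨(hmem i hi1).1, hi2⟩
      · exact fun x _ y _ h => Fin.val_injective h
    rwa [Nat.card_Ico] at h1
  exact mem_blockPf K n t a b t' (by omega) s hcard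
    (fun i hi => le_trans (hmem i hi).2 hbb) (by omega)
end
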